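/- arXiv:2211.07974 — 5 statements merged into one kernel-verified Lean document; each statement's English description precedes it below -/
import Mathlib

section
/- If X is a Banach function space over ℝⁿ with associate space X', then the condition '⟨|f|⟩_Q · ‖χ_Q‖_X ≤ C ‖f χ_Q‖_X for all locally integrable f and all cubes Q' is equivalent to the condition '‖χ_Q‖_X · ‖χ_Q‖_{X'} ≤ C' |Q| for all cubes Q' (with comparable constants). -/
open MeasureTheory ENNReal

noncomputable section

/-- An axis-parallel cube in `ℝⁿ`, given by its center and (positive) side length. -/
structure Cube (n : ℕ) where
  center : EuclideanSpace ℝ (Fin n)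
  side : ℝ
  side_pos : 0 < side

namespace Cube

variable {n : ℕ}

/-- The (closed) cube as a subset of `ℝⁿ`. -/
def toSet (Q : Cube n) : Set (EuclideanSpace ℝ (Fin n)) :=
  {x | ∀ i, |x i - Q.center i| ≤ Q.side / 2}

/-- The volume `|Q| = side^n` of a cube. -/
def vol (Q : Cube n) : ℝ := Q.side ^ n

/-- The Euclidean diameter `√n · side` of a cube. -/
def diam (Q : Cube n) : ℝ := Real.sqrt n * Q.side

/-- The concentric dilation `tQ` of a cube. -/
def dilate (Q : Cube n) (t : ℝ) (ht : 0 < t) : Cube n :=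
  ⟨Q.center, t * Q.side, mul_pos ht Q.side_pos⟩

/-- A dyadic child of a cube, indexed by a choice of sign in each coordinate. -/
def child (Q : Cube n) (s : Fin n → Bool) : Cube n :=
  ⟨WithLp.toLp 2 (fun i => Q.center i + (if s i then (1 : ℝ) else -1) * Q.side / 4), Q.side / 2, by
    have := Q.side_pos; linarith⟩

end Cube

/-- Distance between two sets in `ℝⁿ`: `inf {dist x y : x ∈ A, y ∈ B}`. -/
def setDist {n : ℕ} (A B : Set (EuclideanSpace ℝ (Fin n))) : ℝ :=
  ⨅ (x : A) (y : B), dist (x : EuclideanSpace ℝ (Fin n)) (y : EuclideanSpace ℝ (Fin n))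

/-- The average `⟨|f|⟩_Q = (1/|Q|) ∫_Q |f|` (as an extended nonnegative real). -/
def avg {n : ℕ} (Q : Cube n) (f : EuclideanSpace ℝ (Fin n) → ℝ) : ℝ≥0∞ :=
  (ENNReal.ofReal Q.vol)⁻¹ * ∫⁻ x in Q.toSet, ENNReal.ofReal |f x|

/-- The Hardy–Littlewood maximal operator over axis-parallel cubes. -/
def maximal {n : ℕ} (f : EuclideanSpace ℝ (Fin n) → ℝ)
    (x : EuclideanSpace ℝ (Fin n)) : ℝ≥0∞ :=
  ⨆ (Q : Cube n) (_ : x ∈ Q.toSet), avg Q f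

/-- Weighted Morrey norm adapted to a family `F` of cubes, for `ℝ≥0∞`-valued `f`:
`sup_{Q ∈ F} ((1/|Q|^λ) ∫_Q f^p w)^{1/p}`. -/
def morreyNormE {n : ℕ} (F : Set (Cube n)) (lam p : ℝ)
    (w : EuclideanSpace ℝ (Fin n) → ℝ) (f : EuclideanSpace ℝ (Fin n) → ℝ≥0∞) : ℝ≥0∞ :=
  ⨆ (Q : Cube n) (_ : Q ∈ F),
    ((ENNReal.ofReal (Q.vol ^ lam))⁻¹ *
      ∫⁻ x in Q.toSet, (f x) ^ p * ENNReal.ofReal (w x)) ^ (1 / p)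

/-- Weighted Morrey norm adapted to a family `F` of cubes, for real-valued `f`. -/
def morreyNorm {n : ℕ} (F : Set (Cube n)) (lam p : ℝ)
    (w f : EuclideanSpace ℝ (Fin n) → ℝ) : ℝ≥0∞ :=
  morreyNormE F lam p w (fun x => ENNReal.ofReal |f x|)

/-- The Whitney-type family `W_{r₁,r₂}` of cubes with
`r₁ diam Q ≤ dist(Q,Ω) ≤ r₂ diam Q`. -/
def whitneyFamily {n : ℕ} (Ω : Set (EuclideanSpace ℝ (Fin n))) (r₁ r₂ : ℝ) :
    Set (Cube n) :=
  {Q | r₁ * Q.diam ≤ setDist Q.toSet Ω ∧ setDist Q.toSet Ω ≤ r₂ * Q.diam}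

/-- The Muckenhoupt-type condition `A_X` for the weighted Morrey space attached to `F`:
`⟨|f|⟩_Q ‖χ_Q‖ ≤ C ‖f χ_Q‖` for all `f` and all cubes `Q`. -/
def morreyA {n : ℕ} (F : Set (Cube n)) (lam p : ℝ)
    (w : EuclideanSpace ℝ (Fin n) → ℝ) (C : ℝ) : Prop :=
  ∀ (f : EuclideanSpace ℝ (Fin n) → ℝ) (Q : Cube n),
    avg Q f * morreyNorm F lam p w (Q.toSet.indicator fun _ => 1) ≤
      ENNReal.ofReal C * morreyNorm F lam p w (Q.toSet.indicator f)

/-- Boundedness of the Hardy–Littlewood maximal operator on the weighted Morrey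
space attached to `F`, with constant `C`. -/
def maximalBoundedOnMorrey {n : ℕ} (F : Set (Cube n)) (lam p : ℝ)
    (w : EuclideanSpace ℝ (Fin n) → ℝ) (C : ℝ) : Prop :=
  ∀ f : EuclideanSpace ℝ (Fin n) → ℝ,
    morreyNormE F lam p w (maximal f) ≤ ENNReal.ofReal C * morreyNorm F lam p w f

/-- A (minimal axiomatization of a) Banach function space over `ℝⁿ`, given by a
function norm on nonnegative extended-real-valued functions. -/
structure BanachFunctionSpace (n : ℕ) where
  N : (EuclideanSpace ℝ (Fin n) → ℝ≥0∞) → ℝ≥0∞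
  mono : ∀ f g, (∀ x, f x ≤ g x) → N f ≤ N g
  smul : ∀ (c : ℝ≥0∞), c ≠ ⊤ → ∀ f, N (fun x => c * f x) = c * N f
  add_le : ∀ f g, N (fun x => f x + g x) ≤ N f + N g
  eq_zero_iff : ∀ f, (N f = 0 ↔ ∀ᵐ x ∂(MeasureTheory.volume), f x = 0)
  fatou : ∀ f : ℕ → (EuclideanSpace ℝ (Fin n) → ℝ≥0∞),
    (∀ k x, f k x ≤ f (k + 1) x) → N (fun x => ⨆ k, f k x) = ⨆ k, N (f k)
  ind_finite : ∀ Q : Cube n, N (Q.toSet.indicator fun _ => 1) < ⊤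
  ind_pos : ∀ Q : Cube n, 0 < N (Q.toSet.indicator fun _ => 1)
  loc_embed : ∀ Q : Cube n, ∃ C : ℝ≥0∞, C ≠ ⊤ ∧
    ∀ f, (∫⁻ x in Q.toSet, f x) ≤ C * N f

/-- The associate space norm `‖g‖_{X'} = sup {∫ f g : ‖f‖_X ≤ 1}`. -/
def BanachFunctionSpace.assoc {n : ℕ} (X : BanachFunctionSpace n)
    (g : EuclideanSpace ℝ (Fin n) → ℝ≥0∞) : ℝ≥0∞ :=
  ⨆ (f : EuclideanSpace ℝ (Fin n) → ℝ≥0∞) (_ : X.N f ≤ 1), ∫⁻ x, f x * g x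

/-- The maximal operator acting on `ℝ≥0∞`-valued functions. -/
def maximalE {n : ℕ} (f : EuclideanSpace ℝ (Fin n) → ℝ≥0∞)
    (x : EuclideanSpace ℝ (Fin n)) : ℝ≥0∞ :=
  ⨆ (Q : Cube n) (_ : x ∈ Q.toSet),
    (ENNReal.ofReal Q.vol)⁻¹ * ∫⁻ y in Q.toSet, f y

lemma Cube.measurableSet_toSet {n : ℕ} (Q : Cube n) : MeasurableSet Q.toSet := by
  have h : Q.toSet = ⋂ i, {x : EuclideanSpace ℝ (Fin n) | |x i - Q.center i| ≤ Q.side / 2} := by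
    ext x; simp [Cube.toSet, Set.mem_iInter]
  rw [h]
  refine MeasurableSet.iInter fun i => ?_
  have hm : Measurable fun x : EuclideanSpace ℝ (Fin n) => |x i - Q.center i| :=
    (((EuclideanSpace.proj i : EuclideanSpace ℝ (Fin n) →L[ℝ] ℝ).continuous.sub
      continuous_const).abs).measurable
  exact measurableSet_le hm measurable_const

lemma Cube.vol_pos {n : ℕ} (Q : Cube n) : 0 < Q.vol := pow_pos Q.side_pos n

lemma holder_aux {n : ℕ} (X : BanachFunctionSpace n)
    (g h : EuclideanSpace ℝ (Fin n) → ℝ≥0∞)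
    (h0 : X.N g ≠ 0) (htop : X.N g ≠ ⊤) :
    ∫⁻ x, g x * h x ≤ X.N g * X.assoc h := by
  set a := X.N g with ha
  have hinv : a⁻¹ ≠ ⊤ := by simp [ENNReal.inv_ne_top, h0]
  have h1 : X.N (fun x => a⁻¹ * g x) ≤ 1 := by
    rw [X.smul a⁻¹ hinv g, ← ha, ENNReal.inv_mul_cancel h0 htop]
  have h2 : (∫⁻ x, (a⁻¹ * g x) * h x) ≤ X.assoc h := by
    exact le_iSup₂ (f := fun f (_ : X.N f ≤ 1) => ∫⁻ x, f x * h x) (fun x => a⁻¹ * g x) h1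
  calc ∫⁻ x, g x * h x = a * ∫⁻ x, (a⁻¹ * g x) * h x := by
        rw [show (fun x => (a⁻¹ * g x) * h x) = fun x => a⁻¹ * (g x * h x) by
          funext x; ring]
        rw [lintegral_const_mul' _ _ hinv, ← mul_assoc, ENNReal.mul_inv_cancel h0 htop,
          one_mul]
    _ ≤ a * X.assoc h := mul_le_mul_right h2 a

/-- For a Banach function space `X` over `ℝⁿ`, the `A_X` condition
`⟨|f|⟩_Q ‖χ_Q‖_X ≤ C ‖f χ_Q‖_X` (for all locally integrable `f` and all cubes `Q`)
is equivalent to `‖χ_Q‖_X ‖χ_Q‖_{X'} ≤ C' |Q|` for all cubes `Q`. -/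
theorem statement0 {n : ℕ} (hn : 0 < n) (X : BanachFunctionSpace n) :
    (∃ C : ℝ, 0 < C ∧ ∀ f : EuclideanSpace ℝ (Fin n) → ℝ,
        MeasureTheory.LocallyIntegrable f MeasureTheory.volume → ∀ Q : Cube n,
        avg Q f * X.N (Q.toSet.indicator fun _ => 1) ≤
          ENNReal.ofReal C * X.N (Q.toSet.indicator fun y => ENNReal.ofReal |f y|)) ↔
    (∃ C : ℝ, 0 < C ∧ ∀ Q : Cube n,
        X.N (Q.toSet.indicator fun _ => 1) * X.assoc (Q.toSet.indicator fun _ => 1) ≤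
          ENNReal.ofReal C * ENNReal.ofReal Q.vol) := by
  constructor
  · rintro ⟨C, hC, hA⟩
    refine ⟨C, hC, fun Q => ?_⟩
    have hvol0 : ENNReal.ofReal Q.vol ≠ 0 := by
      simp [ENNReal.ofReal_eq_zero, not_le, Q.vol_pos]
    have hvoltop : ENNReal.ofReal Q.vol ≠ ⊤ := ENNReal.ofReal_ne_top
    set χ := Q.toSet.indicator (fun _ => (1 : ℝ≥0∞)) with hχ
    have key : ∀ f : EuclideanSpace ℝ (Fin n) → ℝ≥0∞, X.N f ≤ 1 →
        X.N χ * ∫⁻ x, f x * χ x ≤ ENNReal.ofReal C * ENNReal.ofReal Q.vol := by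
      intro f hf
      have hind : (fun x => f x * χ x) = Q.toSet.indicator f := by
        funext x
        by_cases hx : x ∈ Q.toSet <;> simp [hχ, Set.indicator, hx]
      rw [hind, lintegral_indicator Q.measurableSet_toSet,
        lintegral_eq_nnreal f (volume.restrict Q.toSet), ENNReal.mul_iSup]
      refine iSup_le fun φ => ?_
      rw [ENNReal.mul_iSup]
      refine iSup_le fun hφ => ?_
      -- the real-valued locally integrable function
      set g : EuclideanSpace ℝ (Fin n) → ℝ := fun x => (φ x : ℝ) with hg
      obtain ⟨M, hM⟩ := φ.exists_forall_le
      have hgmeas : Measurable g := φ.measurable.coe_nnreal_real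
      have hgloc : MeasureTheory.LocallyIntegrable g MeasureTheory.volume := by
        refine (locallyIntegrable_const (M : ℝ)).mono hgmeas.aestronglyMeasurable ?_
        filter_upwards with x
        simp only [hg, Real.norm_eq_abs, abs_of_nonneg (φ x).coe_nonneg]
        exact le_trans (by exact_mod_cast hM x) (le_abs_self _)
      have habs : ∀ x, ENNReal.ofReal |g x| = (φ x : ℝ≥0∞) := by
        intro x
        rw [hg, abs_of_nonneg (φ x).coe_nonneg, ENNReal.ofReal_coe_nnreal]
      have hmain := hA g hgloc Q
      have hNle : X.N (Q.toSet.indicator fun y => ENNReal.ofReal |g y|) ≤ 1 := by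
        refine le_trans (X.mono _ f ?_) hf
        intro x
        by_cases hx : x ∈ Q.toSet
        · simpa [Set.indicator, hx, habs x] using hφ x
        · simp [Set.indicator, hx]
      have hmain2 : avg Q g * X.N χ ≤ ENNReal.ofReal C :=
        le_trans hmain (by
          calc ENNReal.ofReal C * X.N (Q.toSet.indicator fun y => ENNReal.ofReal |g y|)
              ≤ ENNReal.ofReal C * 1 := mul_le_mul_right hNle _
            _ = ENNReal.ofReal C := mul_one _)
      have havg : avg Q g = (ENNReal.ofReal Q.vol)⁻¹ * ∫⁻ x in Q.toSet, (φ x : ℝ≥0∞) := by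
        rw [avg]
        congr 1
        exact lintegral_congr fun x => by rw [habs x]
      have hlin : (φ.map ENNReal.ofNNReal).lintegral (volume.restrict Q.toSet)
          = ∫⁻ x in Q.toSet, (φ x : ℝ≥0∞) := by
        rw [← SimpleFunc.lintegral_eq_lintegral]
        exact lintegral_congr fun x => by simp
      rw [havg] at hmain2
      rw [hlin]
      calc X.N χ * ∫⁻ x in Q.toSet, (φ x : ℝ≥0∞)
          = ((ENNReal.ofReal Q.vol)⁻¹ * (∫⁻ x in Q.toSet, (φ x : ℝ≥0∞)) * X.N χ) *
              ENNReal.ofReal Q.vol := by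
            have hrw : ((ENNReal.ofReal Q.vol)⁻¹ * (∫⁻ x in Q.toSet, (φ x : ℝ≥0∞)) * X.N χ) *
                ENNReal.ofReal Q.vol =
                ((ENNReal.ofReal Q.vol)⁻¹ * ENNReal.ofReal Q.vol) *
                  (X.N χ * ∫⁻ x in Q.toSet, (φ x : ℝ≥0∞)) := by ring
            rw [hrw, ENNReal.inv_mul_cancel hvol0 hvoltop, one_mul]
        _ ≤ ENNReal.ofReal C * ENNReal.ofReal Q.vol :=
            mul_le_mul_left hmain2 _
    calc X.N χ * X.assoc χ
        = ⨆ (f : EuclideanSpace ℝ (Fin n) → ℝ≥0∞) (_ : X.N f ≤ 1),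
            X.N χ * ∫⁻ x, f x * χ x := by
          rw [BanachFunctionSpace.assoc]
          simp_rw [ENNReal.mul_iSup]
      _ ≤ ENNReal.ofReal C * ENNReal.ofReal Q.vol := iSup₂_le key
  · rintro ⟨C, hC, hB⟩
    refine ⟨C, hC, fun f _ Q => ?_⟩
    have hvol0 : ENNReal.ofReal Q.vol ≠ 0 := by
      simp [ENNReal.ofReal_eq_zero, not_le, Q.vol_pos]
    have hvoltop : ENNReal.ofReal Q.vol ≠ ⊤ := ENNReal.ofReal_ne_top
    have hC0 : ENNReal.ofReal C ≠ 0 := by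
      simp [ENNReal.ofReal_eq_zero, not_le, hC]
    set χ := Q.toSet.indicator (fun _ => (1 : ℝ≥0∞)) with hχ
    set g := Q.toSet.indicator (fun y => ENNReal.ofReal |f y|) with hgdef
    by_cases htop : X.N g = ⊤
    · rw [htop, ENNReal.mul_top hC0]
      exact le_top
    by_cases h0 : X.N g = 0
    · have hae : ∀ᵐ x ∂(MeasureTheory.volume), g x = 0 := (X.eq_zero_iff g).mp h0
      have hI : (∫⁻ x in Q.toSet, ENNReal.ofReal |f x|) = 0 := by
        rw [← lintegral_indicator Q.measurableSet_toSet]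
        calc (∫⁻ x, Q.toSet.indicator (fun y => ENNReal.ofReal |f y|) x) =
            ∫⁻ x, (0 : ℝ≥0∞) := lintegral_congr_ae (by filter_upwards [hae] with x hx; exact hx)
          _ = 0 := lintegral_zero
      rw [avg, hI, mul_zero, zero_mul]
      exact zero_le
    · have hgχ : (fun x => g x * χ x) = g := by
        funext x
        by_cases hx : x ∈ Q.toSet <;> simp [hχ, hgdef, Set.indicator, hx]
      have hhold : (∫⁻ x, g x) ≤ X.N g * X.assoc χ := by
        have := holder_aux X g χ h0 htop
        rwa [hgχ] at this
      have hI : (∫⁻ x in Q.toSet, ENNReal.ofReal |f x|) = ∫⁻ x, g x := by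
        rw [hgdef, lintegral_indicator Q.measurableSet_toSet]
      have hBχ : X.N χ * X.assoc χ ≤ ENNReal.ofReal C * ENNReal.ofReal Q.vol := by
        rw [hχ]; exact hB Q
      rw [avg, hI]
      calc (ENNReal.ofReal Q.vol)⁻¹ * (∫⁻ x, g x) * X.N χ
          ≤ (ENNReal.ofReal Q.vol)⁻¹ * (X.N g * X.assoc χ) * X.N χ := by
            gcongr
        _ = (ENNReal.ofReal Q.vol)⁻¹ * X.N g * (X.N χ * X.assoc χ) := by ring
        _ ≤ (ENNReal.ofReal Q.vol)⁻¹ * X.N g * (ENNReal.ofReal C * ENNReal.ofReal Q.vol) :=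
            mul_le_mul_right hBχ _
        _ = ENNReal.ofReal C * X.N g * ((ENNReal.ofReal Q.vol)⁻¹ * ENNReal.ofReal Q.vol) := by
            ring
        _ = ENNReal.ofReal C * X.N g := by
            rw [ENNReal.inv_mul_cancel hvol0 hvoltop, mul_one]
end
end

section
/- Let Ω ⊆ ℝⁿ be nonempty, let r₁ > 1 and α > 1 with μ := 2(r₂+1)/(α−1) + 1 < r₁. Suppose Q is a cube with r₁·diam Q ≤ dist(Q, Ω) ≤ r₂·diam Q, and R is a cube with R ∩ Q ≠ ∅ and dist(R, Ω) > α·diam R. Then diam R ≤ ((r₂+1)/(α−1))·diam Q, and consequently R ⊆ μQ, the concentric dilation of Q by factor μ. -/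
open MeasureTheory ENNReal

noncomputable section

lemma cube_center_mem {n : ℕ} (Q : Cube n) : Q.center ∈ Q.toSet := by
  intro i
  have := Q.side_pos
  simp only [sub_self, abs_zero]
  linarith

lemma cube_dist_le_diam {n : ℕ} (Q : Cube n) {x y : EuclideanSpace ℝ (Fin n)}
    (hx : x ∈ Q.toSet) (hy : y ∈ Q.toSet) : dist x y ≤ Q.diam := by
  rw [EuclideanSpace.dist_eq, Cube.diam]
  have h : ∀ i, dist (x i) (y i) ^ 2 ≤ Q.side ^ 2 := by
    intro i
    have h1 := hx i
    have h2 := hy i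
    have : dist (x i) (y i) ≤ Q.side := by
      rw [Real.dist_eq]
      have : |x i - y i| ≤ |x i - Q.center i| + |Q.center i - y i| := by
        have := abs_sub_abs_le_abs_sub (x i - Q.center i) (y i - Q.center i)
        calc |x i - y i| = |(x i - Q.center i) - (y i - Q.center i)| := by ring_nf
          _ ≤ |x i - Q.center i| + |y i - Q.center i| := abs_sub _ _
          _ = |x i - Q.center i| + |Q.center i - y i| := by rw [abs_sub_comm (y i)]
      have h3 : |Q.center i - y i| = |y i - Q.center i| := abs_sub_comm _ _
      linarith [hy i, h3 ▸ this]
    have hd : (0:ℝ) ≤ dist (x i) (y i) := dist_nonneg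
    nlinarith
  calc Real.sqrt (∑ i, dist (x i) (y i) ^ 2) ≤ Real.sqrt (∑ _i : Fin n, Q.side ^ 2) :=
        Real.sqrt_le_sqrt (Finset.sum_le_sum fun i _ => h i)
    _ = Real.sqrt (n * Q.side ^ 2) := by rw [Finset.sum_const]; simp [mul_comm]
    _ = Real.sqrt n * Q.side := by
        rw [Real.sqrt_mul (Nat.cast_nonneg n), Real.sqrt_sq Q.side_pos.le]

lemma setDist_le_dist {n : ℕ} {A B : Set (EuclideanSpace ℝ (Fin n))}
    {x y : EuclideanSpace ℝ (Fin n)} (hx : x ∈ A) (hy : y ∈ B) :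
    setDist A B ≤ dist x y := by
  have hbdd : BddBelow (Set.range fun x : A =>
      ⨅ y : B, dist (x : EuclideanSpace ℝ (Fin n)) (y : EuclideanSpace ℝ (Fin n))) := by
    refine ⟨0, ?_⟩
    rintro _ ⟨a, rfl⟩
    exact Real.iInf_nonneg fun b => dist_nonneg
  have hbdd2 : BddBelow (Set.range fun b : B =>
      dist x (b : EuclideanSpace ℝ (Fin n))) := by
    refine ⟨0, ?_⟩
    rintro _ ⟨b, rfl⟩
    exact dist_nonneg
  have h1 : setDist A B ≤ ⨅ b : B, dist x (b : EuclideanSpace ℝ (Fin n)) :=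
    ciInf_le hbdd ⟨x, hx⟩
  have h2 : (⨅ b : B, dist x (b : EuclideanSpace ℝ (Fin n))) ≤ dist x y :=
    ciInf_le hbdd2 ⟨y, hy⟩
  exact le_trans h1 h2

/-- if `Q ∈ W_{r₁,r₂}`, `R ∩ Q ≠ ∅` and `dist(R,Ω) > α diam R`,
then `diam R ≤ ((r₂+1)/(α−1)) diam Q` and `R ⊆ μQ` with `μ = 2(r₂+1)/(α−1) + 1`. -/
theorem statement7 {n : ℕ} (hn : 0 < n) (Ω : Set (EuclideanSpace ℝ (Fin n)))
    (hΩ : Ω.Nonempty) (r₁ r₂ α : ℝ) (hr₁ : 1 < r₁) (hr₂ : 0 < r₂) (hα : 1 < α)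
    (hμ : 2 * (r₂ + 1) / (α - 1) + 1 < r₁) (Q R : Cube n)
    (hQ1 : r₁ * Q.diam ≤ setDist Q.toSet Ω) (hQ2 : setDist Q.toSet Ω ≤ r₂ * Q.diam)
    (hQR : (R.toSet ∩ Q.toSet).Nonempty) (hR : α * R.diam < setDist R.toSet Ω) :
    R.diam ≤ (r₂ + 1) / (α - 1) * Q.diam ∧
      R.toSet ⊆ (Q.dilate (2 * (r₂ + 1) / (α - 1) + 1) (by
        have h := div_nonneg (by linarith : (0:ℝ) ≤ 2 * (r₂ + 1))
          (by linarith : (0:ℝ) ≤ α - 1)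
        linarith)).toSet := by
  
  obtain ⟨z, hzR, hzQ⟩ := hQR
  have hsqrt : (0:ℝ) < Real.sqrt n := Real.sqrt_pos.mpr (by exact_mod_cast hn)
  have hdQ : 0 < Q.diam := mul_pos hsqrt Q.side_pos
  have hdR : 0 < R.diam := mul_pos hsqrt R.side_pos
  have hα1 : (0:ℝ) < α - 1 := by linarith
  -- setDist R Ω ≤ setDist Q Ω + Q.diam
  have key : setDist R.toSet Ω ≤ setDist Q.toSet Ω + Q.diam := by
    have hQne : Nonempty Q.toSet := ⟨⟨Q.center, cube_center_mem Q⟩⟩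
    have hΩne : Nonempty Ω := ⟨⟨hΩ.choose, hΩ.choose_spec⟩⟩
    have : setDist R.toSet Ω - Q.diam ≤ setDist Q.toSet Ω := by
      refine le_ciInf fun q => le_ciInf fun ω => ?_
      have h1 : setDist R.toSet Ω ≤ dist z (ω : EuclideanSpace ℝ (Fin n)) :=
        setDist_le_dist hzR ω.2
      have h2 : dist z (ω : EuclideanSpace ℝ (Fin n)) ≤
          dist z (q : EuclideanSpace ℝ (Fin n)) +
          dist (q : EuclideanSpace ℝ (Fin n)) (ω : EuclideanSpace ℝ (Fin n)) :=
        dist_triangle _ _ _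
      have h3 : dist z (q : EuclideanSpace ℝ (Fin n)) ≤ Q.diam :=
        cube_dist_le_diam Q hzQ q.2
      linarith
    linarith
  have hmain : α * R.diam < (r₂ + 1) * Q.diam := by
    calc α * R.diam < setDist R.toSet Ω := hR
      _ ≤ setDist Q.toSet Ω + Q.diam := key
      _ ≤ r₂ * Q.diam + Q.diam := by linarith
      _ = (r₂ + 1) * Q.diam := by ring
  have hdiam : R.diam ≤ (r₂ + 1) / (α - 1) * Q.diam := by
    rw [div_mul_eq_mul_div, le_div_iff₀ hα1]
    nlinarith
  refine ⟨hdiam, ?_⟩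
  have hside : R.side ≤ (r₂ + 1) / (α - 1) * Q.side := by
    have : Real.sqrt n * R.side ≤ (r₂ + 1) / (α - 1) * (Real.sqrt n * Q.side) := hdiam
    have h2 : Real.sqrt n * R.side ≤ Real.sqrt n * ((r₂ + 1) / (α - 1) * Q.side) := by
      linarith [this]
    exact le_of_mul_le_mul_left (by linarith [h2]) hsqrt
  intro x hx i
  simp only [Cube.dilate, Cube.toSet, Set.mem_setOf_eq] at *
  have h1 : |x i - z i| ≤ R.side := by
    have ha := hx i
    have hb := hzR i
    calc |x i - z i| = |(x i - R.center i) - (z i - R.center i)| := by ring_nf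
      _ ≤ |x i - R.center i| + |z i - R.center i| := abs_sub _ _
      _ ≤ R.side := by linarith
  have h2 : |z i - Q.center i| ≤ Q.side / 2 := hzQ i
  have h3 : |x i - Q.center i| ≤ |x i - z i| + |z i - Q.center i| := by
    calc |x i - Q.center i| = |(x i - z i) + (z i - Q.center i)| := by ring_nf
      _ ≤ _ := abs_add_le _ _
  have hQs := Q.side_pos
  calc |x i - Q.center i| ≤ R.side + Q.side / 2 := by linarith
    _ ≤ (r₂ + 1) / (α - 1) * Q.side + Q.side / 2 := by linarith
    _ = (2 * (r₂ + 1) / (α - 1) + 1) * Q.side / 2 := by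
        field_simp
end
end

section
/- Let P be a cube in ℝⁿ, r > 1, and let L be a cube of maximal diameter contained in the cubic annulus rP ∖ P. Then |L| = ((r−1)/2)ⁿ|P| and (1/(√n(r−1)))·diam L = ℓ_P/2 ≤ dist(L, c_P) ≤ (diam P)/2 = (1/(r−1))·diam L, where c_P and ℓ_P are the center and side length of P. -/
open MeasureTheory ENNReal

noncomputable section

private lemma abs_add_signed (d u : ℝ) (hu : 0 ≤ u) :
    |d + (if 0 ≤ d then u else -u)| = |d| + u := by
  split_ifs with h
  · rw [abs_of_nonneg (by linarith), abs_of_nonneg h]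
  · push_neg at h
    rw [abs_of_nonpos (by linarith), abs_of_neg h]; ring

private lemma clamp_bounds {m a s K : ℝ} (hs : 0 < s) (hK : 0 ≤ K) (h : |m - a| ≤ K + s / 2) :
    |max (m - s / 2) (min a (m + s / 2)) - m| ≤ s / 2 ∧
      |max (m - s / 2) (min a (m + s / 2)) - a| ≤ K := by
  rcases abs_le.mp h with ⟨h1, h2⟩
  rcases le_total a (m - s / 2) with h3 | h3
  · rw [min_eq_left (by linarith), max_eq_left h3]
    constructor <;> rw [abs_le] <;> constructor <;> linarith
  · rcases le_total a (m + s / 2) with h4 | h4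
    · rw [min_eq_left h4, max_eq_right h3]
      constructor <;> rw [abs_le] <;> constructor <;> linarith
    · rw [min_eq_right h4, max_eq_right (by linarith)]
      constructor <;> rw [abs_le] <;> constructor <;> linarith

private lemma coord_le_dist {n : ℕ} (x y : EuclideanSpace ℝ (Fin n)) (i : Fin n) :
    |x i - y i| ≤ dist x y := by
  rw [EuclideanSpace.dist_eq, ← Real.sqrt_sq_eq_abs]
  apply Real.sqrt_le_sqrt
  have := Finset.single_le_sum (f := fun j => dist (x j) (y j) ^ 2)
    (fun j _ => sq_nonneg _) (Finset.mem_univ i)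
  simpa [Real.dist_eq, sq_abs] using this

private lemma dist_le_of_coord {n : ℕ} (x y : EuclideanSpace ℝ (Fin n)) {b : ℝ} (hb : 0 ≤ b)
    (h : ∀ i, |x i - y i| ≤ b) : dist x y ≤ Real.sqrt n * b := by
  rw [EuclideanSpace.dist_eq]
  have h1 : (∑ i, dist (x i) (y i) ^ 2) ≤ (n : ℝ) * b ^ 2 := by
    calc ∑ i, dist (x i) (y i) ^ 2 ≤ ∑ _i : Fin n, b ^ 2 :=
          Finset.sum_le_sum fun i _ => by
            rw [Real.dist_eq]; exact pow_le_pow_left₀ (abs_nonneg _) (h i) 2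
      _ = (n : ℝ) * b ^ 2 := by simp [Finset.sum_const, Finset.card_univ]
  calc Real.sqrt (∑ i, dist (x i) (y i) ^ 2) ≤ Real.sqrt ((n : ℝ) * b ^ 2) :=
        Real.sqrt_le_sqrt h1
    _ = Real.sqrt n * b := by rw [Real.sqrt_mul (Nat.cast_nonneg n), Real.sqrt_sq hb]

private lemma openCube_subset_interior {n : ℕ} (Q : Cube n) :
    {x : EuclideanSpace ℝ (Fin n) | ∀ i, |x i - Q.center i| < Q.side / 2} ⊆ interior Q.toSet := by
  apply interior_maximal
  · intro x hx i; exact (hx i).le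
  · have he : {x : EuclideanSpace ℝ (Fin n) | ∀ i, |x i - Q.center i| < Q.side / 2} =
        ⋂ i, (fun x : EuclideanSpace ℝ (Fin n) => x i) ⁻¹' Metric.ball (Q.center i) (Q.side / 2) := by
      ext x; simp [Real.dist_eq]
    rw [he]
    exact isOpen_iInter_of_finite fun i => Metric.isOpen_ball.preimage (PiLp.continuous_apply _ _ i)

private lemma interior_subset_openCube {n : ℕ} (Q : Cube n) :
    interior Q.toSet ⊆ {x : EuclideanSpace ℝ (Fin n) | ∀ i, |x i - Q.center i| < Q.side / 2} := by
  intro x hx i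
  obtain ⟨ε, hε, hball⟩ := Metric.mem_nhds_iff.mp (mem_interior_iff_mem_nhds.mp hx)
  set t : ℝ := if 0 ≤ x i - Q.center i then ε / 2 else -(ε / 2) with ht
  have habs : |t| = ε / 2 := by
    rw [ht]; split_ifs
    · exact abs_of_nonneg (by linarith)
    · rw [abs_neg]; exact abs_of_nonneg (by linarith)
  have hy : (x + EuclideanSpace.single i t) ∈ Q.toSet := by
    apply hball
    have hd : dist (x + EuclideanSpace.single i t) x = |t| := by
      rw [dist_comm, dist_self_add_right, EuclideanSpace.norm_single, Real.norm_eq_abs]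
    simp only [Metric.mem_ball, hd, habs]
    linarith
  have h1 := hy i
  have h2 : (x + EuclideanSpace.single i t) i = x i + t := by
    show x i + EuclideanSpace.single i t i = x i + t
    rw [EuclideanSpace.single_apply, if_pos rfl]
  rw [h2] at h1
  have h3 : x i + t - Q.center i = (x i - Q.center i) + (if 0 ≤ x i - Q.center i then ε / 2 else -(ε / 2)) := by
    rw [← ht]; ring
  rw [h3, abs_add_signed _ _ (by linarith)] at h1
  linarith


/-- a cube `L` of maximal diameter contained in the cubic annulus
`rP ∖ P` satisfies `|L| = ((r−1)/2)ⁿ |P|` and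
`(1/(√n(r−1))) diam L = ℓ_P/2 ≤ dist(L, c_P) ≤ (diam P)/2 = (1/(r−1)) diam L`. -/
theorem statement10 {n : ℕ} (hn : 0 < n) (P : Cube n) (r : ℝ) (hr : 1 < r)
    (L : Cube n)
    (hL : L.toSet ⊆ (P.dilate r (by linarith)).toSet \ interior P.toSet)
    (hmax : ∀ L' : Cube n,
      L'.toSet ⊆ (P.dilate r (by linarith)).toSet \ interior P.toSet →
      L'.diam ≤ L.diam) :
    L.vol = ((r - 1) / 2) ^ n * P.vol ∧
      1 / (Real.sqrt n * (r - 1)) * L.diam = P.side / 2 ∧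
      P.side / 2 ≤ Metric.infDist P.center L.toSet ∧
      Metric.infDist P.center L.toSet ≤ P.diam / 2 ∧
      P.diam / 2 = 1 / (r - 1) * L.diam  := by
  have hℓ : 0 < P.side := P.side_pos
  set ℓ := P.side with hℓdef
  have hr1 : 0 < r - 1 := by linarith
  have hs0 : 0 < (r - 1) / 2 * ℓ := by positivity
  have hcmem : ∀ Q : Cube n, Q.center ∈ Q.toSet := by
    intro Q i
    simp only [sub_self, abs_zero]
    linarith [Q.side_pos]
  -- Step A: coordinate bound on the center of L
  have hm : ∀ i, |L.center i - P.center i| ≤ r * ℓ / 2 - L.side / 2 := by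
    intro i
    set t : ℝ := if 0 ≤ L.center i - P.center i then L.side / 2 else -(L.side / 2) with ht
    have habs : |t| = L.side / 2 := by
      rw [ht]; split_ifs
      · exact abs_of_nonneg (by linarith [L.side_pos])
      · rw [abs_neg]; exact abs_of_nonneg (by linarith [L.side_pos])
    have hp : (L.center + EuclideanSpace.single i t) ∈ L.toSet := by
      intro j
      have : (L.center + EuclideanSpace.single i t) j - L.center j = EuclideanSpace.single i t j := by
        show L.center j + EuclideanSpace.single i t j - L.center j = _
        ring
      rw [this, EuclideanSpace.single_apply]
      split_ifs
      · rw [habs]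
      · simp only [abs_zero]; linarith [L.side_pos]
    have h1 := (hL hp).1 i
    simp only [Cube.dilate, Cube.toSet, Set.mem_setOf_eq] at h1
    have h2 : (L.center + EuclideanSpace.single i t) i = L.center i + t := by
      show L.center i + EuclideanSpace.single i t i = L.center i + t
      rw [EuclideanSpace.single_apply, if_pos rfl]
    rw [h2] at h1
    have h3 : L.center i + t - P.center i = (L.center i - P.center i) +
        (if 0 ≤ L.center i - P.center i then L.side / 2 else -(L.side / 2)) := by
      rw [← ht]; ring
    rw [h3, abs_add_signed _ _ (by linarith [L.side_pos])] at h1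
    linarith
  -- Step B: upper bound on the side of L
  have hub : L.side ≤ (r - 1) / 2 * ℓ := by
    by_contra hc
    push_neg at hc
    set K : ℝ := max 0 (r * ℓ / 2 - L.side) with hK
    have hK0 : 0 ≤ K := le_max_left _ _
    set x : EuclideanSpace ℝ (Fin n) :=
      WithLp.toLp 2 (fun i => max (L.center i - L.side / 2) (min (P.center i) (L.center i + L.side / 2)))
      with hxdef
    have hcb : ∀ i, |x i - L.center i| ≤ L.side / 2 ∧ |x i - P.center i| ≤ K := by
      intro i
      exact clamp_bounds L.side_pos hK0
        (le_trans (hm i) (by linarith [le_max_right (0:ℝ) (r * ℓ / 2 - L.side)]))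
    have hxL : x ∈ L.toSet := fun i => (hcb i).1
    have hKlt : K < ℓ / 2 := by
      rw [hK]
      apply max_lt (by linarith) (by linarith)
    have hxint : x ∈ interior P.toSet :=
      openCube_subset_interior P (fun i => lt_of_le_of_lt (hcb i).2 hKlt)
    exact (hL hxL).2 hxint
  -- Step C: lower bound on the side of L via maximality
  have hlb : (r - 1) / 2 * ℓ ≤ L.side := by
    set i0 : Fin n := ⟨0, hn⟩ with hi0
    set L' : Cube n := ⟨WithLp.toLp 2 (fun j => if j = i0 then P.center j + (r + 1) * ℓ / 4 else P.center j),
      (r - 1) / 2 * ℓ, hs0⟩ with hL'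
    have hsub : L'.toSet ⊆ (P.dilate r (by linarith)).toSet \ interior P.toSet := by
      intro x hx
      have hx0 := hx i0
      simp only [hL', Cube.toSet, Set.mem_setOf_eq, PiLp.toLp_apply, eq_self_iff_true, if_true] at hx0
      obtain ⟨hx0a, hx0b⟩ := abs_le.mp hx0
      constructor
      · intro i
        simp only [Cube.dilate, Cube.toSet, Set.mem_setOf_eq]
        by_cases hi : i = i0
        · subst hi
          rw [abs_le]; constructor <;> [linarith; linarith]
        · have hxi := hx i
          simp only [hL', Cube.toSet, Set.mem_setOf_eq, PiLp.toLp_apply, if_neg hi] at hxi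
          obtain ⟨hxa, hxb⟩ := abs_le.mp hxi
          rw [abs_le]; constructor <;> [nlinarith; nlinarith]
      · intro hmem
        have := interior_subset_openCube P hmem i0
        have h4 := abs_lt.mp this
        -- x i0 - P.center i0 ≥ ℓ/2
        nlinarith [h4.2]
    have hd := hmax L' hsub
    simp only [Cube.diam, hL'] at hd ⊢
    have hsqrt : 0 < Real.sqrt n := Real.sqrt_pos.mpr (by exact_mod_cast hn)
    exact le_of_mul_le_mul_left hd hsqrt
  have hside : L.side = (r - 1) / 2 * ℓ := le_antisymm hub hlb
  have hsqrtn : Real.sqrt n ≠ 0 := ne_of_gt (Real.sqrt_pos.mpr (by exact_mod_cast hn))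
  refine ⟨?_, ?_, ?_, ?_, ?_⟩
  · rw [Cube.vol, Cube.vol, hside, mul_pow]
  · rw [Cube.diam, hside]
    field_simp
  · have hne : L.toSet.Nonempty := ⟨L.center, hcmem L⟩
    haveI : Nonempty L.toSet := hne.to_subtype
    rw [Metric.infDist_eq_iInf]
    apply le_ciInf
    intro y
    have hex : ∃ i, ℓ / 2 ≤ |(y : EuclideanSpace ℝ (Fin n)) i - P.center i| := by
      by_contra hcon
      push_neg at hcon
      exact (hL y.2).2 (openCube_subset_interior P (fun i => hcon i))
    obtain ⟨i, hi⟩ := hex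
    calc ℓ / 2 ≤ |(y : EuclideanSpace ℝ (Fin n)) i - P.center i| := hi
      _ = |P.center i - (y : EuclideanSpace ℝ (Fin n)) i| := abs_sub_comm _ _
      _ ≤ dist P.center (y : EuclideanSpace ℝ (Fin n)) := coord_le_dist _ _ i
  · set x : EuclideanSpace ℝ (Fin n) :=
      WithLp.toLp 2 (fun i => max (L.center i - L.side / 2) (min (P.center i) (L.center i + L.side / 2)))
      with hxdef
    have hcb : ∀ i, |x i - L.center i| ≤ L.side / 2 ∧ |x i - P.center i| ≤ ℓ / 2 := by
      intro i
      refine clamp_bounds L.side_pos (by linarith) (le_trans (hm i) ?_)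
      rw [hside]; nlinarith
    have hxL : x ∈ L.toSet := fun i => (hcb i).1
    calc Metric.infDist P.center L.toSet ≤ dist P.center x := Metric.infDist_le_dist_of_mem hxL
      _ ≤ Real.sqrt n * (ℓ / 2) := by
          apply dist_le_of_coord _ _ (by linarith)
          intro i
          rw [abs_sub_comm]
          exact (hcb i).2
      _ = P.diam / 2 := by rw [Cube.diam]; ring
  · rw [Cube.diam, Cube.diam, hside]
    field_simp
    ring
end
end

section
/- Let P be a cube in ℝⁿ and N ∈ ℕ, N ≥ 1. Then the cubic annulus (1+1/N)P ∖ P can be covered by 2ⁿ((N+1)ⁿ − Nⁿ) pairwise disjoint cubes L_j, each of volume |P|/(2N)ⁿ, satisfying (N/√n)·diam L_j ≤ dist(L_j, c_P) ≤ N·diam L_j, where c_P is the center of P. -/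
open MeasureTheory ENNReal

noncomputable section

namespace S11Aux

variable {n : ℕ}

lemma coord_le_dist (x y : EuclideanSpace ℝ (Fin n)) (i : Fin n) :
    |x i - y i| ≤ dist x y := by
  rw [EuclideanSpace.dist_eq]
  have h1 : |x i - y i| = Real.sqrt (dist (x i) (y i) ^ 2) := by
    rw [Real.sqrt_sq_eq_abs, Real.dist_eq, abs_abs]
  rw [h1]
  refine Real.sqrt_le_sqrt ?_
  exact Finset.single_le_sum (f := fun j => dist (x j) (y j) ^ 2)
    (fun j _ => by positivity) (Finset.mem_univ i)

lemma dist_le_of_coords (x y : EuclideanSpace ℝ (Fin n)) {C : ℝ} (hC : 0 ≤ C)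
    (h : ∀ i, |x i - y i| ≤ C) : dist x y ≤ Real.sqrt n * C := by
  rw [EuclideanSpace.dist_eq]
  have h2 : (∑ i, dist (x i) (y i) ^ 2) ≤ (n : ℝ) * C ^ 2 := by
    calc (∑ i, dist (x i) (y i) ^ 2) ≤ ∑ _i : Fin n, C ^ 2 := by
          refine Finset.sum_le_sum fun i _ => ?_
          rw [Real.dist_eq]
          exact pow_le_pow_left₀ (abs_nonneg _) (h i) 2
      _ = (n : ℝ) * C ^ 2 := by simp [mul_comm]
  calc Real.sqrt (∑ i, dist (x i) (y i) ^ 2) ≤ Real.sqrt ((n : ℝ) * C ^ 2) :=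
        Real.sqrt_le_sqrt h2
    _ = Real.sqrt n * C := by
        rw [Real.sqrt_mul (by positivity), Real.sqrt_sq hC]

lemma interior_toSet (Q : Cube n) :
    interior Q.toSet = {x | ∀ i, |x i - Q.center i| < Q.side / 2} := by
  set H := (PiLp.continuousLinearEquiv 2 ℝ (fun _ : Fin n => ℝ)).toHomeomorph with hH
  have hHx : ∀ (x : EuclideanSpace ℝ (Fin n)) (i : Fin n), H x i = x i := fun _ _ => rfl
  have hset : Q.toSet = H ⁻¹'
      (Set.pi Set.univ fun i => Set.Icc (Q.center i - Q.side / 2) (Q.center i + Q.side / 2)) := by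
    ext x
    simp only [Cube.toSet, Set.mem_setOf_eq, Set.mem_preimage, Set.mem_univ_pi, Set.mem_Icc, hHx]
    refine forall_congr' fun i => ?_
    rw [abs_le]
    constructor <;> rintro ⟨h1, h2⟩ <;> constructor <;> linarith
  rw [hset, ← Homeomorph.preimage_interior, interior_pi_set Set.finite_univ]
  ext x
  simp only [Set.mem_preimage, Set.mem_univ_pi, interior_Icc, Set.mem_Ioo, hHx,
    Set.mem_setOf_eq]
  refine forall_congr' fun i => ?_
  rw [abs_lt]
  constructor <;> rintro ⟨h1, h2⟩ <;> constructor <;> linarith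

def innerEquiv (N : ℕ) : {j : Fin (2 * N + 2) // 1 ≤ (j : ℕ) ∧ (j : ℕ) ≤ 2 * N} ≃ Fin (2 * N) where
  toFun j := ⟨(j : ℕ) - 1, by have := j.2; omega⟩
  invFun i := ⟨⟨(i : ℕ) + 1, by omega⟩, by simp⟩
  left_inv := by rintro ⟨⟨j, hj⟩, h⟩; ext; simp at h ⊢; omega
  right_inv := by rintro ⟨i, hi⟩; ext; simp

lemma card_boundary (n N : ℕ) :
    Fintype.card {k : Fin n → Fin (2 * N + 2) // ¬ ∀ i, 1 ≤ (k i : ℕ) ∧ (k i : ℕ) ≤ 2 * N}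
      = 2 ^ n * ((N + 1) ^ n - N ^ n) := by
  classical
  rw [Fintype.card_subtype_compl]
  have h1 : Fintype.card (Fin n → Fin (2 * N + 2)) = (2 * N + 2) ^ n := by
    simp [Fintype.card_fun]
  have h2 : Fintype.card {k : Fin n → Fin (2 * N + 2) // ∀ i, 1 ≤ (k i : ℕ) ∧ (k i : ℕ) ≤ 2 * N}
      = (2 * N) ^ n := by
    rw [Fintype.card_congr (Equiv.subtypePiEquivPi.trans
      (Equiv.piCongrRight fun _ => innerEquiv N))]
    simp [Fintype.card_fun]
  rw [h1, h2]
  have h3 : (2 * N + 2) = 2 * (N + 1) := by ring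
  rw [h3, mul_pow, mul_pow, ← Nat.mul_sub_left_distrib]

/-- The grid cube with index `k` in the tiling of `(1+1/N)P` by cubes of side `ℓ_P/(2N)`. -/
def bcube (P : Cube n) (N : ℕ) (hN : 1 ≤ N) (k : Fin n → Fin (2 * N + 2)) : Cube n :=
  ⟨WithLp.toLp 2 (fun i => P.center i + ((k i : ℝ) - N - 1 / 2) * (P.side / (2 * N))), P.side / (2 * N),
    div_pos P.side_pos (by
      have h : (1 : ℝ) ≤ (N : ℝ) := by exact_mod_cast hN
      linarith)⟩

end S11Aux

/-- the annulus `(1+1/N)P ∖ P` can be covered by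
`2ⁿ((N+1)ⁿ − Nⁿ)` cubes with pairwise disjoint interiors, each of volume
`|P|/(2N)ⁿ`, with `(N/√n) diam L_j ≤ dist(L_j, c_P) ≤ N diam L_j`. -/
theorem statement11 {n : ℕ} (hn : 0 < n) (P : Cube n) (N : ℕ) (hN : 1 ≤ N) :
    ∃ L : Fin (2 ^ n * ((N + 1) ^ n - N ^ n)) → Cube n,
      ((P.dilate (1 + 1 / N) (by
          have h : (0:ℝ) ≤ 1 / (N : ℝ) := by positivity
          linarith)).toSet \ interior P.toSet ⊆ ⋃ j, (L j).toSet) ∧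
      (∀ i j, i ≠ j → Disjoint (interior (L i).toSet) (interior (L j).toSet)) ∧
      ∀ j, (L j).vol = P.vol / (2 * N) ^ n ∧
        (N : ℝ) / Real.sqrt n * (L j).diam ≤ Metric.infDist P.center (L j).toSet ∧
        Metric.infDist P.center (L j).toSet ≤ (N : ℝ) * (L j).diam := by
  classical
  have hN0 : (0 : ℝ) < N := by exact_mod_cast Nat.lt_of_lt_of_le Nat.zero_lt_one hN
  have hNne : (N : ℝ) ≠ 0 := hN0.ne'
  obtain ⟨s, hs_def⟩ : ∃ s : ℝ, s = P.side / (2 * N) := ⟨_, rfl⟩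
  have hs : 0 < s := by rw [hs_def]; exact div_pos P.side_pos (by linarith)
  have hNs : (N : ℝ) * s = P.side / 2 := by
    rw [hs_def, mul_div_assoc', mul_comm (2 : ℝ) (N : ℝ), ← div_div,
      mul_div_cancel_left₀ _ hNne]
  have hN1s : ((N : ℝ) + 1) * s = (1 + 1 / (N : ℝ)) * P.side / 2 := by
    rw [hs_def, one_add_div hNne, div_mul_eq_mul_div, div_div, mul_div_assoc',
      mul_comm (N : ℝ) 2]
  have hcard := S11Aux.card_boundary n N
  obtain ⟨e⟩ : Nonempty (Fin (2 ^ n * ((N + 1) ^ n - N ^ n)) ≃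
      {k : Fin n → Fin (2 * N + 2) // ¬ ∀ i, 1 ≤ (k i : ℕ) ∧ (k i : ℕ) ≤ 2 * N}) :=
    ⟨(Fintype.equivFinOfCardEq hcard).symm⟩
  clear hcard
  refine ⟨fun j => S11Aux.bcube P N hN ((e j).1), ?_, ?_, ?_⟩
  · -- covering
    rintro x ⟨hx1, hx2⟩
    simp only [Cube.dilate, Cube.toSet, Set.mem_setOf_eq] at hx1
    rw [S11Aux.interior_toSet] at hx2
    simp only [Set.mem_setOf_eq, not_forall, not_lt] at hx2
    obtain ⟨i₀, hi₀⟩ := hx2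
    have hub : ∀ i, |x i - P.center i| ≤ ((N : ℝ) + 1) * s := by
      intro i; rw [hN1s]; exact hx1 i
    have hchoice : ∀ i, ∃ z : ℤ, (-(N : ℤ) - 1 ≤ z ∧ z ≤ N) ∧
        ((z : ℝ) * s ≤ x i - P.center i ∧ x i - P.center i ≤ ((z : ℝ) + 1) * s) ∧
        (i = i₀ → (z = N ∨ z = -(N : ℤ) - 1)) := by
      intro i
      have hub' := hub i
      rw [abs_le] at hub'
      by_cases h : i = i₀
      · by_cases h2 : 0 ≤ x i - P.center i
        · refine ⟨(N : ℤ), ⟨by omega, le_refl _⟩, ⟨?_, ?_⟩, fun _ => Or.inl rfl⟩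
          · have habs : (N : ℝ) * s ≤ |x i - P.center i| := by rw [h, hNs]; exact hi₀
            rw [abs_of_nonneg h2] at habs
            push_cast; linarith
          · push_cast; linarith [hub'.2]
        · refine ⟨-(N : ℤ) - 1, ⟨le_refl _, by omega⟩, ⟨?_, ?_⟩, fun _ => Or.inr rfl⟩
          · push_cast; linarith [hub'.1]
          · have habs : (N : ℝ) * s ≤ |x i - P.center i| := by rw [h, hNs]; exact hi₀
            rw [abs_of_neg (not_le.1 h2)] at habs
            push_cast; linarith
      · have hflo : -(N : ℤ) - 1 ≤ ⌊(x i - P.center i) / s⌋ := by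
          rw [Int.le_floor, le_div_iff₀ hs]
          push_cast
          linarith [hub'.1]
        refine ⟨min (N : ℤ) ⌊(x i - P.center i) / s⌋,
          ⟨le_min (by omega) hflo, min_le_left _ _⟩, ⟨?_, ?_⟩, fun hii => absurd hii h⟩
        · have h1 : ((min (N : ℤ) ⌊(x i - P.center i) / s⌋ : ℤ) : ℝ)
              ≤ (x i - P.center i) / s := by
            calc ((min (N : ℤ) ⌊(x i - P.center i) / s⌋ : ℤ) : ℝ)
                ≤ ((⌊(x i - P.center i) / s⌋ : ℤ) : ℝ) := by
                  exact_mod_cast min_le_right _ _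
              _ ≤ _ := Int.floor_le _
          calc ((min (N : ℤ) ⌊(x i - P.center i) / s⌋ : ℤ) : ℝ) * s
              ≤ (x i - P.center i) / s * s := mul_le_mul_of_nonneg_right h1 hs.le
            _ = x i - P.center i := div_mul_cancel₀ _ hs.ne'
        · rcases le_or_gt ⌊(x i - P.center i) / s⌋ (N : ℤ) with hfN | hfN
          · rw [min_eq_right hfN]
            have h2 := Int.lt_floor_add_one ((x i - P.center i) / s)
            rw [div_lt_iff₀ hs] at h2
            push_cast at h2 ⊢
            linarith
          · rw [min_eq_left hfN.le]
            push_cast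
            linarith [hub'.2]
    choose jz hjz1 hjz2 hjz3 using hchoice
    have hk_lt : ∀ i, (jz i + (N : ℤ) + 1).toNat < 2 * N + 2 := by
      intro i; have h1 := (hjz1 i).1; have h2 := (hjz1 i).2; omega
    obtain ⟨k, hkeq⟩ : ∃ k : Fin n → Fin (2 * N + 2),
        ∀ i, ((k i : ℕ) : ℤ) = jz i + N + 1 :=
      ⟨fun i => ⟨(jz i + (N : ℤ) + 1).toNat, hk_lt i⟩, fun i =>
        Int.toNat_of_nonneg (by have h1 := (hjz1 i).1; omega)⟩
    have hkcast : ∀ i, ((k i : ℕ) : ℝ) = (jz i : ℝ) + N + 1 := by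
      intro i
      have h4 : ((k i : ℕ) : ℝ) = ((jz i + (N : ℤ) + 1 : ℤ) : ℝ) := by
        exact_mod_cast congrArg (fun z : ℤ => (z : ℝ)) (hkeq i)
      rw [h4]; push_cast; ring
    have hbd : ¬ ∀ i, 1 ≤ (k i : ℕ) ∧ (k i : ℕ) ≤ 2 * N := by
      intro hall
      have h := hall i₀
      have hji := hjz3 i₀ rfl
      have hkv := hkeq i₀
      omega
    refine Set.mem_iUnion.2 ⟨e.symm ⟨k, hbd⟩, ?_⟩
    show x ∈ (S11Aux.bcube P N hN ((e (e.symm ⟨k, hbd⟩)).1)).toSet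
    rw [Equiv.apply_symm_apply]
    intro i
    show |x i - (P.center i + (((k i : ℕ) : ℝ) - N - 1 / 2) * (P.side / (2 * N)))|
      ≤ P.side / (2 * N) / 2
    rw [← hs_def, hkcast i, abs_le]
    have hm := hjz2 i
    constructor
    · linarith [hm.1]
    · linarith [hm.2]
  · -- disjointness
    intro a b hab
    have hk : (e a).1 ≠ (e b).1 := fun h => hab (e.injective (Subtype.ext h))
    obtain ⟨i, hi⟩ := Function.ne_iff.1 hk
    rw [Set.disjoint_left]
    intro x hxa hxb
    rw [S11Aux.interior_toSet] at hxa hxb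
    have h1 := hxa i
    have h2 := hxb i
    simp only [S11Aux.bcube, WithLp.ofLp_toLp] at h1 h2
    rw [← hs_def] at h1 h2
    rw [abs_lt] at h1 h2
    have hne : ((e a).1 i : ℕ) ≠ ((e b).1 i : ℕ) := fun h => hi (Fin.ext h)
    rcases Nat.lt_or_ge ((e a).1 i : ℕ) ((e b).1 i : ℕ) with hlt | hge
    · have hc : (((e a).1 i : ℕ) : ℝ) + 1 ≤ (((e b).1 i : ℕ) : ℝ) := by exact_mod_cast hlt
      have hmul := mul_le_mul_of_nonneg_right hc hs.le
      linarith [h1.2, h2.1]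
    · have hlt' : ((e b).1 i : ℕ) < ((e a).1 i : ℕ) := lt_of_le_of_ne hge (Ne.symm hne)
      have hc : (((e b).1 i : ℕ) : ℝ) + 1 ≤ (((e a).1 i : ℕ) : ℝ) := by exact_mod_cast hlt'
      have hmul := mul_le_mul_of_nonneg_right hc hs.le
      linarith [h2.2, h1.1]
  · -- volume and distance bounds
    intro j
    obtain ⟨K, hK⟩ : ∃ K, e j = K := ⟨e j, rfl⟩
    obtain ⟨k, hbd⟩ := K
    beta_reduce
    rw [hK]
    have hsqrt : (0 : ℝ) < Real.sqrt n := Real.sqrt_pos.2 (by exact_mod_cast hn)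
    have hdiam : (S11Aux.bcube P N hN k).diam = Real.sqrt n * s := by
      simp only [S11Aux.bcube, Cube.diam]
      rw [← hs_def]
    have hbn : ∃ i, (k i : ℕ) = 0 ∨ (k i : ℕ) = 2 * N + 1 := by
      by_contra hno
      push_neg at hno
      exact hbd fun i => by have h := hno i; have h2 := (k i).isLt; omega
    obtain ⟨i1, hi1⟩ := hbn
    refine ⟨?_, ?_, ?_⟩
    · show (S11Aux.bcube P N hN k).vol = P.vol / (2 * N) ^ n
      simp only [S11Aux.bcube, Cube.vol]
      rw [div_pow]
    · -- lower bound
      show (N : ℝ) / Real.sqrt n * (S11Aux.bcube P N hN k).diam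
        ≤ Metric.infDist P.center (S11Aux.bcube P N hN k).toSet
      rw [hdiam]
      have key : (N : ℝ) / Real.sqrt n * (Real.sqrt n * s) = N * s := by
        field_simp
      rw [key]
      refine le_of_not_gt fun hlt => ?_
      have hne : (S11Aux.bcube P N hN k).toSet.Nonempty :=
        ⟨(S11Aux.bcube P N hN k).center, fun i => by
          rw [sub_self, abs_zero]
          exact (half_pos (S11Aux.bcube P N hN k).side_pos).le⟩
      obtain ⟨y, hy, hdy⟩ := (Metric.infDist_lt_iff hne).1 hlt
      have hcoord := S11Aux.coord_le_dist P.center y i1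
      have hy1 := hy i1
      simp only [S11Aux.bcube, WithLp.ofLp_toLp] at hy1
      rw [← hs_def] at hy1
      rw [abs_le] at hy1
      rcases hi1 with h0 | hone
      · have hc0 : ((k i1 : ℕ) : ℝ) = 0 := by rw [h0]; simp
        rw [hc0] at hy1
        have hlow : (N : ℝ) * s ≤ P.center i1 - y i1 := by linarith [hy1.2]
        have habs := le_abs_self (P.center i1 - y i1)
        linarith [hcoord, hdy]
      · have hc1 : ((k i1 : ℕ) : ℝ) = 2 * N + 1 := by rw [hone]; push_cast; ring
        rw [hc1] at hy1
        have hlow : (N : ℝ) * s ≤ y i1 - P.center i1 := by linarith [hy1.1]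
        have habs := neg_abs_le (P.center i1 - y i1)
        linarith [hcoord, hdy]
    · -- upper bound
      show Metric.infDist P.center (S11Aux.bcube P N hN k).toSet
        ≤ (N : ℝ) * (S11Aux.bcube P N hN k).diam
      obtain ⟨y, hymem, hydist⟩ :
          ∃ y ∈ (S11Aux.bcube P N hN k).toSet,
            dist P.center y ≤ Real.sqrt n * ((N : ℝ) * s) := by
        refine ⟨WithLp.toLp 2 (fun i => max (P.center i + (((k i : ℕ) : ℝ) - N - 1) * s)
            (min (P.center i + (((k i : ℕ) : ℝ) - N) * s) (P.center i))), fun i => ?_, ?_⟩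
        · show |max (P.center i + (((k i : ℕ) : ℝ) - N - 1) * s)
              (min (P.center i + (((k i : ℕ) : ℝ) - N) * s) (P.center i)) -
              (P.center i + (((k i : ℕ) : ℝ) - N - 1 / 2) * (P.side / (2 * N)))|
            ≤ P.side / (2 * N) / 2
          rw [← hs_def, abs_le]
          have hAB : P.center i + (((k i : ℕ) : ℝ) - N - 1) * s
              ≤ P.center i + (((k i : ℕ) : ℝ) - N) * s := by nlinarith [hs.le]
          constructor
          · have h := le_max_left (P.center i + (((k i : ℕ) : ℝ) - N - 1) * s)
              (min (P.center i + (((k i : ℕ) : ℝ) - N) * s) (P.center i))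
            linarith [h]
          · have h := max_le hAB
              (min_le_left (P.center i + (((k i : ℕ) : ℝ) - N) * s) (P.center i))
            linarith [h]
        · refine S11Aux.dist_le_of_coords _ _ (by positivity) fun i => ?_
          show |P.center i - max (P.center i + (((k i : ℕ) : ℝ) - N - 1) * s)
              (min (P.center i + (((k i : ℕ) : ℝ) - N) * s) (P.center i))| ≤ (N : ℝ) * s
          have hk2 : ((k i : ℕ) : ℝ) ≤ 2 * N + 1 := by
            have h := (k i).isLt
            have h2 : (k i : ℕ) ≤ 2 * N + 1 := by omega
            exact_mod_cast h2
          have hk0 : (0 : ℝ) ≤ ((k i : ℕ) : ℝ) := Nat.cast_nonneg _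
          have e1 : 0 ≤ ((k i : ℕ) : ℝ) * s := mul_nonneg hk0 hs.le
          have e2 : ((k i : ℕ) : ℝ) * s ≤ (2 * N + 1) * s :=
            mul_le_mul_of_nonneg_right hk2 hs.le
          have hNs0 : 0 ≤ (N : ℝ) * s := by positivity
          rw [abs_le]
          constructor
          · have hA : P.center i + (((k i : ℕ) : ℝ) - N - 1) * s ≤ P.center i + N * s := by
              nlinarith [e2]
            have hmin : min (P.center i + (((k i : ℕ) : ℝ) - N) * s) (P.center i)
                ≤ P.center i + N * s := (min_le_right _ _).trans (by linarith)
            have h := max_le hA hmin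
            linarith [h]
          · have hB : P.center i - N * s ≤ P.center i + (((k i : ℕ) : ℝ) - N) * s := by
              nlinarith [e1]
            have hmin : P.center i - N * s
                ≤ min (P.center i + (((k i : ℕ) : ℝ) - N) * s) (P.center i) :=
              le_min hB (by linarith)
            have h := hmin.trans (le_max_right
              (P.center i + (((k i : ℕ) : ℝ) - N - 1) * s)
              (min (P.center i + (((k i : ℕ) : ℝ) - N) * s) (P.center i)))
            linarith [h]
      refine (Metric.infDist_le_dist_of_mem hymem).trans (hydist.trans ?_)
      rw [hdiam]
      exact le_of_eq (by ring)
end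
end

section
/- Let 0 < λ < 1, p ≥ 1, w a weight on ℝⁿ, Q a cube with center c_Q, and N ∈ ℕ, N ≥ 1. Then (1/|Q|^λ)∫_Q |f|^p w ≤ C(λ,N,n) · sup_{R ∈ F_N} (1/|R|^λ)∫_R |f|^p w, where F_N is the family of cubes R ⊆ Q with (N/√n)·diam R ≤ dist(R, c_Q) ≤ N·diam R. -/
open MeasureTheory ENNReal

noncomputable section

namespace S12
variable {n : ℕ}


def gam (N : ℕ) : ℝ := N / (N + 1)

lemma gam_nonneg (N : ℕ) : 0 ≤ gam N := by unfold gam; positivity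

lemma gam_pos {N : ℕ} (hN : 1 ≤ N) : 0 < gam N := by
  have : (0:ℝ) < N := by exact_mod_cast hN
  unfold gam; positivity

lemma gam_lt_one (N : ℕ) : gam N < 1 := by
  unfold gam
  rw [div_lt_one (by positivity)]
  linarith

def del (N : ℕ) (s : ℝ) (k : ℕ) : ℝ := gam N ^ (k + 1) * s / (2 * N)

lemma del_pos {N : ℕ} (hN : 1 ≤ N) {s : ℝ} (hs : 0 < s) (k : ℕ) : 0 < del N s k := by
  have h1 : (0:ℝ) < N := by exact_mod_cast hN
  have := gam_pos hN
  unfold del; positivity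

lemma nat_del (N : ℕ) (hN : 1 ≤ N) (s : ℝ) (k : ℕ) :
    (N : ℝ) * del N s k = gam N ^ (k+1) * s / 2 := by
  have h1 : (0:ℝ) < N := by exact_mod_cast hN
  unfold del; field_simp

lemma nat1_del (N : ℕ) (hN : 1 ≤ N) (s : ℝ) (k : ℕ) :
    ((N : ℝ) + 1) * del N s k = gam N ^ k * s / 2 := by
  have h1 : (0:ℝ) < N := by exact_mod_cast hN
  unfold del gam
  have h2 : (N:ℝ) + 1 ≠ 0 := by positivity
  rw [pow_succ, div_pow]
  field_simp

-- coordinate vs distance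
lemma abs_sub_le_dist (x y : EuclideanSpace ℝ (Fin n)) (i : Fin n) :
    |x i - y i| ≤ dist x y := by
  rw [EuclideanSpace.dist_eq, ← Real.sqrt_sq_eq_abs]
  apply Real.sqrt_le_sqrt
  have h := Finset.single_le_sum (f := fun i => dist (x i) (y i) ^ 2)
    (fun i _ => sq_nonneg _) (Finset.mem_univ i)
  simpa [Real.dist_eq, sq_abs] using h

lemma dist_le_sqrt_mul (x y : EuclideanSpace ℝ (Fin n)) (m : ℝ) (hm : 0 ≤ m)
    (h : ∀ i, |x i - y i| ≤ m) : dist x y ≤ Real.sqrt n * m := by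
  rw [EuclideanSpace.dist_eq]
  have : ∑ i, dist (x i) (y i) ^ 2 ≤ n * m ^ 2 := by
    calc ∑ i, dist (x i) (y i) ^ 2 ≤ ∑ _i : Fin n, m ^ 2 := by
          apply Finset.sum_le_sum
          intro i _
          have := h i
          rw [Real.dist_eq]
          nlinarith [abs_nonneg (x i - y i)]
      _ = n * m ^ 2 := by simp [Finset.sum_const, mul_comm]
  calc Real.sqrt (∑ i, dist (x i) (y i) ^ 2) ≤ Real.sqrt (n * m ^ 2) := Real.sqrt_le_sqrt this
    _ = Real.sqrt n * m := by
        rw [Real.sqrt_mul (by positivity), Real.sqrt_sq hm]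


def clamp (N : ℕ) (r : ℝ) : ℤ := max (-(N+1 : ℤ)) (min (N : ℤ) ⌊r⌋)

lemma clamp_le (N : ℕ) (r : ℝ) : clamp N r ≤ (N:ℤ) := by
  unfold clamp
  apply max_le
  · linarith [Int.natCast_nonneg N]
  · exact min_le_left _ _

lemma le_clamp (N : ℕ) (r : ℝ) : -(N+1:ℤ) ≤ clamp N r := le_max_left _ _

lemma clamp_cast (N : ℕ) (r : ℝ) :
    (clamp N r : ℝ) = max (-((N:ℝ)+1)) (min (N:ℝ) (⌊r⌋ : ℝ)) := by
  unfold clamp; push_cast; ring_nf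

lemma clamp_bounds {δ t : ℝ} (hδ : 0 < δ) (N : ℕ) (ht : |t| ≤ ((N:ℝ)+1)*δ) :
    (clamp N (t/δ) : ℝ) * δ ≤ t ∧ t ≤ ((clamp N (t/δ) : ℝ)+1) * δ := by
  have habs := abs_le.mp ht
  have hfl : (⌊t/δ⌋ : ℝ) ≤ t/δ := Int.floor_le _
  have hfl2 : t/δ < (⌊t/δ⌋ : ℝ) + 1 := Int.lt_floor_add_one _
  rw [clamp_cast]
  constructor
  · rw [← le_div_iff₀ hδ]
    apply max_le
    · rw [le_div_iff₀ hδ]; nlinarith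
    · exact le_trans (min_le_right _ _) hfl
  · rw [← div_le_iff₀ hδ]
    have h1 : t/δ ≤ (N:ℝ) + 1 := by rw [div_le_iff₀ hδ]; nlinarith
    have h2 : t/δ ≤ min ((N:ℝ)) ((⌊t/δ⌋:ℝ)) + 1 := by
      rcases le_total ((⌊t/δ⌋:ℝ)) (N:ℝ) with h | h
      · rw [min_eq_right h]; linarith
      · rw [min_eq_left h]; linarith
    have := le_max_right (-((N:ℝ)+1)) (min (N:ℝ) (⌊t/δ⌋ : ℝ))
    linarith

lemma clamp_special {δ t : ℝ} (hδ : 0 < δ) (N : ℕ) (ht : (N:ℝ)*δ < |t|) :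
    clamp N (t/δ) = (N:ℤ) ∨ clamp N (t/δ) = -(N+1:ℤ) := by
  have hNN : -(N+1:ℤ) ≤ (N:ℤ) := by linarith [Int.natCast_nonneg N]
  rcases lt_abs.mp ht with h | h
  · left
    have h1 : (N:ℝ) ≤ t/δ := by rw [le_div_iff₀ hδ]; linarith
    have h2 : (N:ℤ) ≤ ⌊t/δ⌋ := Int.le_floor.mpr (by exact_mod_cast h1)
    unfold clamp
    rw [min_eq_left h2, max_eq_right hNN]
  · right
    have h1 : t/δ < -((N:ℝ)) := by rw [div_lt_iff₀ hδ]; nlinarith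
    have h2 : ⌊t/δ⌋ < -(N:ℤ) := Int.floor_lt.mpr (by push_cast; linarith)
    have h3 : ⌊t/δ⌋ ≤ -(N+1:ℤ) := by omega
    unfold clamp
    rw [min_eq_right (le_trans h3 hNN), max_eq_left h3]



def RC (N : ℕ) (c : EuclideanSpace ℝ (Fin n)) (s : ℝ) (hN : 1 ≤ N) (hs : 0 < s)
    (k : ℕ) (j : Fin n → ℤ) : Cube n :=
  ⟨WithLp.toLp 2 (fun i => c i + ((j i : ℝ) + 1/2) * del N s k : Fin n → ℝ), del N s k, del_pos hN hs k⟩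

lemma mem_RC_iff {N : ℕ} {c : EuclideanSpace ℝ (Fin n)} {s : ℝ} (hN : 1 ≤ N) (hs : 0 < s)
    (k : ℕ) (j : Fin n → ℤ) (x : EuclideanSpace ℝ (Fin n)) :
    x ∈ (RC N c s hN hs k j).toSet ↔
      ∀ i, (j i : ℝ) * del N s k ≤ x i - c i ∧ x i - c i ≤ ((j i : ℝ) + 1) * del N s k := by
  simp only [RC, Cube.toSet, Set.mem_setOf_eq, PiLp.toLp_apply]
  apply forall_congr'
  intro i
  rw [abs_le]
  constructor <;> (intro h; constructor <;> nlinarith [h.1, h.2])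

/-- the index set of valid lattice positions -/
def J (n N : ℕ) : Set (Fin n → ℤ) :=
  {j | (∀ i, -(N+1:ℤ) ≤ j i ∧ j i ≤ (N:ℤ)) ∧ ∃ i, j i = (N:ℤ) ∨ j i = -(N+1:ℤ)}

lemma J_finite (n N : ℕ) : (J n N).Finite := by
  apply Set.Finite.subset (Set.Finite.pi (fun i : Fin n => Set.finite_Icc (-(N+1:ℤ)) (N:ℤ)))
  intro j hj
  simp only [Set.mem_pi, Set.mem_univ, Set.mem_Icc, forall_true_left]
  intro i
  exact ⟨(hj.1 i).1, (hj.1 i).2⟩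



lemma RC_abs_le {N : ℕ} {c : EuclideanSpace ℝ (Fin n)} {s : ℝ} (hN : 1 ≤ N) (hs : 0 < s)
    (k : ℕ) (j : Fin n → ℤ) (hj : j ∈ J n N) {x : EuclideanSpace ℝ (Fin n)}
    (hx : x ∈ (RC N c s hN hs k j).toSet) (i : Fin n) :
    |x i - c i| ≤ gam N ^ k * s / 2 := by
  have h := (mem_RC_iff hN hs k j x).mp hx i
  have hb := hj.1 i
  have hb1 : ((j i : ℝ)) ≤ (N:ℝ) := by exact_mod_cast hb.2
  have hb2 : (-((N:ℝ)+1)) ≤ (j i : ℝ) := by exact_mod_cast hb.1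
  have hδ := del_pos hN hs k
  have h1 := nat1_del N hN s k
  rw [abs_le]
  constructor <;> nlinarith [h.1, h.2]

lemma RC_center_mem {N : ℕ} {c : EuclideanSpace ℝ (Fin n)} {s : ℝ} (hN : 1 ≤ N) (hs : 0 < s)
    (k : ℕ) (j : Fin n → ℤ) : (RC N c s hN hs k j).center ∈ (RC N c s hN hs k j).toSet := by
  intro i
  have := del_pos hN hs k
  simp [RC]
  positivity

lemma RC_infDist_lower {N : ℕ} {c : EuclideanSpace ℝ (Fin n)} {s : ℝ} (hN : 1 ≤ N) (hs : 0 < s)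
    (k : ℕ) (j : Fin n → ℤ) (hj : j ∈ J n N) :
    (N : ℝ) * del N s k ≤ Metric.infDist c (RC N c s hN hs k j).toSet := by
  have hne : (RC N c s hN hs k j).toSet.Nonempty := ⟨_, RC_center_mem hN hs k j⟩
  haveI : Nonempty ((RC N c s hN hs k j).toSet) := hne.to_subtype
  rw [Metric.infDist_eq_iInf]
  apply le_ciInf
  rintro ⟨y, hy⟩
  obtain ⟨i₀, hi₀⟩ := hj.2
  have h := (mem_RC_iff hN hs k j y).mp hy i₀
  have hδ := del_pos hN hs k
  have habs : (N:ℝ) * del N s k ≤ |y i₀ - c i₀| := by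
    rcases hi₀ with h1 | h1
    · have hc : ((j i₀ : ℝ)) = (N:ℝ) := by exact_mod_cast congrArg (Int.cast : ℤ → ℝ) h1
      rw [hc] at h
      calc (N:ℝ) * del N s k ≤ y i₀ - c i₀ := h.1
        _ ≤ |y i₀ - c i₀| := le_abs_self _
    · have hc : ((j i₀ : ℝ)) = -((N:ℝ)+1) := by
        rw [h1]; push_cast; ring
      rw [hc] at h
      calc (N:ℝ) * del N s k ≤ -(y i₀ - c i₀) := by nlinarith [h.2]
        _ ≤ |y i₀ - c i₀| := neg_le_abs _
  calc (N:ℝ) * del N s k ≤ |y i₀ - c i₀| := habs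
    _ = |c i₀ - y i₀| := abs_sub_comm _ _
    _ ≤ dist c y := abs_sub_le_dist c y i₀


lemma RC_infDist_upper {N : ℕ} {c : EuclideanSpace ℝ (Fin n)} {s : ℝ} (hN : 1 ≤ N) (hs : 0 < s)
    (k : ℕ) (j : Fin n → ℤ) (hj : j ∈ J n N) :
    Metric.infDist c (RC N c s hN hs k j).toSet ≤ Real.sqrt n * ((N:ℝ) * del N s k) := by
  set δ := del N s k with hδdef
  have hδ := del_pos hN hs k
  set y : EuclideanSpace ℝ (Fin n) :=
    WithLp.toLp 2 (fun i => c i + max ((j i : ℝ) * δ) (min (((j i : ℝ) + 1) * δ) 0) : Fin n → ℝ) with hy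
  have hyc : ∀ i, y i - c i = max ((j i : ℝ) * δ) (min (((j i : ℝ) + 1) * δ) 0) := by
    intro i; rw [hy, PiLp.toLp_apply]; ring
  have hmem : y ∈ (RC N c s hN hs k j).toSet := by
    rw [mem_RC_iff hN hs k j]
    intro i
    rw [hyc i]
    constructor
    · exact le_max_left _ _
    · apply max_le
      · nlinarith
      · exact le_trans (min_le_left _ _) le_rfl
  have hbnd : ∀ i, |y i - c i| ≤ (N:ℝ) * δ := by
    intro i
    have hb := hj.1 i
    have hb1 : ((j i : ℝ)) ≤ (N:ℝ) := by exact_mod_cast hb.2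
    have hb2 : (-((N:ℝ)+1)) ≤ (j i : ℝ) := by exact_mod_cast hb.1
    rw [hyc i, abs_le]
    constructor
    · have h1 : -((N:ℝ) * δ) ≤ min (((j i : ℝ) + 1) * δ) 0 := by
        apply le_min
        · nlinarith
        · nlinarith [mul_nonneg (Nat.cast_nonneg (α := ℝ) N) hδ.le]
      exact le_trans h1 (le_max_right _ _)
    · apply max_le
      · nlinarith
      · exact le_trans (min_le_right _ _) (by positivity)
  calc Metric.infDist c (RC N c s hN hs k j).toSet ≤ dist c y :=
        Metric.infDist_le_dist_of_mem hmem
    _ ≤ Real.sqrt n * ((N:ℝ) * δ) := by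
        apply dist_le_sqrt_mul
        · positivity
        · intro i
          rw [abs_sub_comm]
          exact hbnd i

lemma cover_lemma {N : ℕ} {c : EuclideanSpace ℝ (Fin n)} {s : ℝ} (hN : 1 ≤ N) (hs : 0 < s)
    (hn : 0 < n) (x : EuclideanSpace ℝ (Fin n)) (hx : ∀ i, |x i - c i| ≤ s / 2)
    (hxc : x ≠ c) : ∃ k : ℕ, ∃ j ∈ J n N, x ∈ (RC N c s hN hs k j).toSet := by
  classical
  haveI : Nonempty (Fin n) := ⟨⟨0, hn⟩⟩
  -- a coordinate where x differs from c
  have hex : ∃ i, x i ≠ c i := by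
    by_contra hcon
    push_neg at hcon
    exact hxc (PiLp.ext hcon)
  obtain ⟨i₁, hi₁⟩ := hex
  -- maximizing coordinate
  obtain ⟨i₀, -, hi₀⟩ := Finset.exists_max_image Finset.univ (fun i => |x i - c i|)
    ⟨i₁, Finset.mem_univ i₁⟩
  set m := |x i₀ - c i₀| with hm
  have hmax : ∀ i, |x i - c i| ≤ m := fun i => hi₀ i (Finset.mem_univ i)
  have hm0 : 0 < m := lt_of_lt_of_le (abs_pos.mpr (sub_ne_zero.mpr hi₁)) (hmax i₁)
  have hms : m ≤ s / 2 := hx i₀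
  -- find k
  have hP : ∃ K : ℕ, gam N ^ (K + 1) * s / 2 < m := by
    obtain ⟨K, hK⟩ := exists_pow_lt_of_lt_one (show (0:ℝ) < 2 * m / s by positivity)
      (gam_lt_one N)
    refine ⟨K, ?_⟩
    have hγ := gam_pos hN
    have h1 : gam N ^ (K+1) ≤ gam N ^ K := by
      apply pow_le_pow_of_le_one (gam_nonneg N) (gam_lt_one N).le
      omega
    have h2 : gam N ^ K * s < 2 * m := by
      calc gam N ^ K * s < (2 * m / s) * s := by
            apply mul_lt_mul_of_pos_right hK hs
        _ = 2 * m := by field_simp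
    nlinarith
  set k := Nat.find hP with hk
  have hk1 : gam N ^ (k + 1) * s / 2 < m := Nat.find_spec hP
  have hk2 : m ≤ gam N ^ k * s / 2 := by
    rcases Nat.eq_zero_or_pos k with h0 | h0
    · rw [h0]; simpa using hms
    · have := Nat.find_min hP (show k - 1 < k by omega)
      push_neg at this
      have hkk : k - 1 + 1 = k := by omega
      rwa [hkk] at this
  set δ := del N s k with hδdef
  have hδ := del_pos hN hs k
  have hN1δ : ((N:ℝ)+1) * δ = gam N ^ k * s / 2 := nat1_del N hN s k
  have hNδ : (N:ℝ) * δ = gam N ^ (k+1) * s / 2 := nat_del N hN s k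
  refine ⟨k, fun i => clamp N ((x i - c i)/δ), ⟨⟨fun i => ⟨le_clamp N _, clamp_le N _⟩, ?_⟩, ?_⟩⟩
  · -- special coordinate
    refine ⟨i₀, ?_⟩
    apply clamp_special hδ
    rw [hNδ]
    exact hk1
  · rw [mem_RC_iff hN hs k _]
    intro i
    have := clamp_bounds hδ N (t := x i - c i) (by rw [hN1δ]; exact le_trans (hmax i) hk2)
    exact this


lemma pow_rpow {γ : ℝ} (hγ : 0 ≤ γ) (k : ℕ) (r : ℝ) :
    ((γ ^ k : ℝ)) ^ r = (γ ^ r) ^ k := by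
  rw [← Real.rpow_natCast γ k, ← Real.rpow_natCast (γ ^ r) k,
    ← Real.rpow_mul hγ, ← Real.rpow_mul hγ, mul_comm]

lemma B_lt_top (n N : ℕ) (hN : 1 ≤ N) (lam : ℝ) (hnl : 0 < (n:ℝ) * lam) :
    (∑' pr : ℕ × ↥(J n N),
      ENNReal.ofReal ((gam N ^ (pr.1+1) / (2*(N:ℝ))) ^ ((n:ℝ)*lam))) < ⊤ := by
  haveI : Fintype ↥(J n N) := (J_finite n N).fintype
  have hγpos := gam_pos hN
  have hN0 : (0:ℝ) < N := by exact_mod_cast hN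
  set q : ℝ≥0∞ := ENNReal.ofReal (gam N ^ ((n:ℝ)*lam)) with hq
  have hq1 : q < 1 := by
    rw [hq]
    apply ENNReal.ofReal_lt_one.mpr
    exact Real.rpow_lt_one (gam_nonneg N) (gam_lt_one N) hnl
  have key : ∀ k : ℕ, ENNReal.ofReal ((gam N ^ (k+1) / (2*(N:ℝ))) ^ ((n:ℝ)*lam)) ≤ q ^ k := by
    intro k
    rw [hq, ← ENNReal.ofReal_pow (by positivity)]
    apply ENNReal.ofReal_le_ofReal
    rw [← pow_rpow (gam_nonneg N)]
    apply Real.rpow_le_rpow (by positivity) ?_ hnl.le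
    have hN1 : (1:ℝ) ≤ (N:ℝ) := by exact_mod_cast hN
    have h2N : (1:ℝ) ≤ 2*(N:ℝ) := by linarith
    calc gam N ^ (k+1) / (2*(N:ℝ)) ≤ gam N ^ (k+1) := div_le_self (by positivity) h2N
      _ ≤ gam N ^ k := pow_le_pow_of_le_one (gam_nonneg N) (gam_lt_one N).le (by omega)
  have hsub : (1:ℝ≥0∞) - q ≠ 0 := by
    rw [ne_eq, tsub_eq_zero_iff_le]
    exact hq1.not_ge
  calc (∑' pr : ℕ × ↥(J n N),
        ENNReal.ofReal ((gam N ^ (pr.1+1) / (2*(N:ℝ))) ^ ((n:ℝ)*lam)))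
      = ∑' (k : ℕ) (_j : ↥(J n N)),
          ENNReal.ofReal ((gam N ^ (k+1) / (2*(N:ℝ))) ^ ((n:ℝ)*lam)) := ENNReal.tsum_prod'
    _ ≤ ∑' (k : ℕ) (_j : ↥(J n N)), q ^ k := by
        apply ENNReal.tsum_le_tsum
        intro k
        apply ENNReal.tsum_le_tsum
        intro _
        exact key k
    _ = ∑' (k : ℕ), (Fintype.card ↥(J n N) : ℝ≥0∞) * q ^ k := by
        apply tsum_congr
        intro k
        rw [tsum_fintype]
        simp [Finset.sum_const, nsmul_eq_mul]
    _ = (Fintype.card ↥(J n N) : ℝ≥0∞) * ∑' (k : ℕ), q ^ k := ENNReal.tsum_mul_left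
    _ = (Fintype.card ↥(J n N) : ℝ≥0∞) * (1 - q)⁻¹ := by rw [ENNReal.tsum_geometric]
    _ < ⊤ := by
        apply ENNReal.mul_lt_top
        · exact ENNReal.natCast_lt_top _
        · exact ENNReal.inv_lt_top.mpr (pos_iff_ne_zero.mpr hsub)


end S12

set_option maxHeartbeats 1000000 in
/-- Lemma `redw`: `(1/|Q|^λ)∫_Q |f|^p w` is controlled, with a
constant depending only on `λ, N, n`, by the sup of the corresponding quantities
over cubes `R ⊆ Q` with `(N/√n) diam R ≤ dist(R, c_Q) ≤ N diam R`. -/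
theorem statement12 {n : ℕ} (hn : 0 < n) (lam : ℝ) (hlam0 : 0 < lam)
    (hlam1 : lam < 1) (N : ℕ) (hN : 1 ≤ N) :
    ∃ C : ℝ, 0 < C ∧ ∀ p : ℝ, 1 ≤ p → ∀ w f : EuclideanSpace ℝ (Fin n) → ℝ,
      (∀ x, 0 ≤ w x) → ∀ Q : Cube n,
      (ENNReal.ofReal (Q.vol ^ lam))⁻¹ *
          (∫⁻ x in Q.toSet, ENNReal.ofReal (|f x| ^ p * w x)) ≤
        ENNReal.ofReal C *
          ⨆ (R : Cube n) (_ : R.toSet ⊆ Q.toSet ∧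
              (N : ℝ) / Real.sqrt n * R.diam ≤ Metric.infDist Q.center R.toSet ∧
              Metric.infDist Q.center R.toSet ≤ (N : ℝ) * R.diam),
            (ENNReal.ofReal (R.vol ^ lam))⁻¹ *
              ∫⁻ x in R.toSet, ENNReal.ofReal (|f x| ^ p * w x) := by
  classical
  haveI : Nonempty (Fin n) := ⟨⟨0, hn⟩⟩
  haveI : Fintype ↥(S12.J n N) := (S12.J_finite n N).fintype
  have hnR : (0:ℝ) < n := by exact_mod_cast hn
  have hnl : 0 < (n:ℝ) * lam := by positivity
  set B : ℝ≥0∞ := ∑' pr : ℕ × ↥(S12.J n N),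
      ENNReal.ofReal ((S12.gam N ^ (pr.1+1) / (2*(N:ℝ))) ^ ((n:ℝ)*lam)) with hBdef
  have hBtop : B ≠ ⊤ := (S12.B_lt_top n N hN lam hnl).ne
  have hBR : (0:ℝ) ≤ B.toReal := ENNReal.toReal_nonneg
  refine ⟨B.toReal + 1, by positivity, ?_⟩
  intro p hp w f hw Q
  set c := Q.center with hc
  set s := Q.side with hsdef
  have hs : 0 < s := Q.side_pos
  set S : ℝ≥0∞ := ⨆ (R : Cube n) (_ : R.toSet ⊆ Q.toSet ∧
      (N : ℝ) / Real.sqrt n * R.diam ≤ Metric.infDist c R.toSet ∧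
      Metric.infDist c R.toSet ≤ (N : ℝ) * R.diam),
    (ENNReal.ofReal (R.vol ^ lam))⁻¹ *
      ∫⁻ x in R.toSet, ENNReal.ofReal (|f x| ^ p * w x) with hS
  have sqrtn_pos : 0 < Real.sqrt n := Real.sqrt_pos.mpr hnR
  -- volume rpow identity
  have hvolpow : ∀ (t : ℝ), 0 < t → ((t ^ n : ℝ)) ^ lam = t ^ ((n:ℝ)*lam) := by
    intro t ht
    rw [← Real.rpow_natCast t n, ← Real.rpow_mul ht.le]
  -- per-cube estimate
  have hRS : ∀ (k : ℕ) (j : Fin n → ℤ), j ∈ S12.J n N →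
      (∫⁻ x in (S12.RC N c s hN hs k j).toSet, ENNReal.ofReal (|f x| ^ p * w x)) ≤
        ENNReal.ofReal ((S12.del N s k) ^ ((n:ℝ)*lam)) * S := by
    intro k j hj
    set R := S12.RC N c s hN hs k j with hR
    have hδ := S12.del_pos hN hs k
    have hvol : R.vol ^ lam = (S12.del N s k) ^ ((n:ℝ)*lam) := hvolpow _ hδ
    have hdiam : R.diam = Real.sqrt n * S12.del N s k := rfl
    have hsub : R.toSet ⊆ Q.toSet := by
      intro x hx
      intro i
      have h1 := S12.RC_abs_le hN hs k j hj hx i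
      have h2 : S12.gam N ^ k ≤ 1 :=
        pow_le_one₀ (S12.gam_nonneg N) (S12.gam_lt_one N).le
      have : |x i - c i| ≤ s / 2 := by nlinarith
      exact this
    have hlow : (N : ℝ) / Real.sqrt n * R.diam ≤ Metric.infDist c R.toSet := by
      rw [hdiam]
      have heq : (N : ℝ) / Real.sqrt n * (Real.sqrt n * S12.del N s k)
          = (N:ℝ) * S12.del N s k := by field_simp
      rw [heq]
      exact S12.RC_infDist_lower hN hs k j hj
    have hup : Metric.infDist c R.toSet ≤ (N : ℝ) * R.diam := by
      rw [hdiam]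
      have := S12.RC_infDist_upper (c := c) hN hs k j hj
      calc Metric.infDist c R.toSet ≤ Real.sqrt n * ((N:ℝ) * S12.del N s k) := this
        _ = (N:ℝ) * (Real.sqrt n * S12.del N s k) := by ring
    have hle : (ENNReal.ofReal (R.vol ^ lam))⁻¹ *
        (∫⁻ x in R.toSet, ENNReal.ofReal (|f x| ^ p * w x)) ≤ S := by
      rw [hS]
      exact le_iSup₂ (f := fun (R : Cube n) (_ : R.toSet ⊆ Q.toSet ∧
        (N : ℝ) / Real.sqrt n * R.diam ≤ Metric.infDist c R.toSet ∧
        Metric.infDist c R.toSet ≤ (N : ℝ) * R.diam) =>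
          (ENNReal.ofReal (R.vol ^ lam))⁻¹ *
            ∫⁻ x in R.toSet, ENNReal.ofReal (|f x| ^ p * w x)) R ⟨hsub, hlow, hup⟩
    have ha0 : ENNReal.ofReal (R.vol ^ lam) ≠ 0 := by
      rw [hvol]
      exact (ENNReal.ofReal_pos.mpr (Real.rpow_pos_of_pos hδ _)).ne'
    have ha' : ENNReal.ofReal (R.vol ^ lam) ≠ ⊤ := ENNReal.ofReal_ne_top
    calc (∫⁻ x in R.toSet, ENNReal.ofReal (|f x| ^ p * w x))
        = ENNReal.ofReal (R.vol ^ lam) * ((ENNReal.ofReal (R.vol ^ lam))⁻¹ *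
            (∫⁻ x in R.toSet, ENNReal.ofReal (|f x| ^ p * w x))) := by
          rw [← mul_assoc, ENNReal.mul_inv_cancel ha0 ha', one_mul]
      _ ≤ ENNReal.ofReal (R.vol ^ lam) * S := mul_le_mul_right hle _
      _ = ENNReal.ofReal ((S12.del N s k) ^ ((n:ℝ)*lam)) * S := by rw [hvol]
  -- covering
  have hcov : Q.toSet \ ({c} : Set (EuclideanSpace ℝ (Fin n))) ⊆
      ⋃ pr : ℕ × ↥(S12.J n N), (S12.RC N c s hN hs pr.1 pr.2.1).toSet := by
    rintro x ⟨hxQ, hxc⟩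
    obtain ⟨k, j, hj, hmem⟩ := S12.cover_lemma hN hs hn x (fun i => hxQ i)
      (by simpa using hxc)
    exact Set.mem_iUnion.mpr ⟨(k, ⟨j, hj⟩), hmem⟩
  have hae : Q.toSet \ ({c} : Set (EuclideanSpace ℝ (Fin n))) =ᵐ[volume] Q.toSet :=
    MeasureTheory.diff_ae_eq_self.mpr
      (measure_mono_null Set.inter_subset_right (measure_singleton _))
  have hint : (∫⁻ x in Q.toSet, ENNReal.ofReal (|f x| ^ p * w x)) ≤
      ∑' pr : ℕ × ↥(S12.J n N),
        ∫⁻ x in (S12.RC N c s hN hs pr.1 pr.2.1).toSet,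
          ENNReal.ofReal (|f x| ^ p * w x) := by
    calc (∫⁻ x in Q.toSet, ENNReal.ofReal (|f x| ^ p * w x))
        = ∫⁻ x in Q.toSet \ ({c} : Set (EuclideanSpace ℝ (Fin n))), ENNReal.ofReal (|f x| ^ p * w x) := by
          exact (setLIntegral_congr hae).symm
      _ ≤ ∫⁻ x in ⋃ pr : ℕ × ↥(S12.J n N), (S12.RC N c s hN hs pr.1 pr.2.1).toSet,
            ENNReal.ofReal (|f x| ^ p * w x) := lintegral_mono_set hcov
      _ ≤ _ := lintegral_iUnion_le _ _
  -- put everything together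
  have hQvol : Q.vol ^ lam = s ^ ((n:ℝ)*lam) := hvolpow _ hs
  set a : ℝ≥0∞ := ENNReal.ofReal (s ^ ((n:ℝ)*lam)) with hadef
  have ha0 : a ≠ 0 := (ENNReal.ofReal_pos.mpr (Real.rpow_pos_of_pos hs _)).ne'
  have ha' : a ≠ ⊤ := ENNReal.ofReal_ne_top
  have hdel : ∀ k : ℕ, ENNReal.ofReal ((S12.del N s k) ^ ((n:ℝ)*lam)) =
      a * ENNReal.ofReal ((S12.gam N ^ (k+1) / (2*(N:ℝ))) ^ ((n:ℝ)*lam)) := by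
    intro k
    have hNR : (0:ℝ) < N := by exact_mod_cast hN
    have h1 : S12.del N s k = s * (S12.gam N ^ (k+1) / (2*(N:ℝ))) := by
      unfold S12.del; field_simp
    rw [h1, Real.mul_rpow hs.le
        (div_nonneg (pow_nonneg (S12.gam_nonneg N) _) (by positivity)),
      ENNReal.ofReal_mul (Real.rpow_nonneg hs.le _)]
  have key1 : (∫⁻ x in Q.toSet, ENNReal.ofReal (|f x| ^ p * w x)) ≤ a * (B * S) := by
    calc (∫⁻ x in Q.toSet, ENNReal.ofReal (|f x| ^ p * w x))
        ≤ ∑' pr : ℕ × ↥(S12.J n N),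
            (∫⁻ x in (S12.RC N c s hN hs pr.1 pr.2.1).toSet,
              ENNReal.ofReal (|f x| ^ p * w x)) := hint
      _ ≤ ∑' pr : ℕ × ↥(S12.J n N),
            (ENNReal.ofReal ((S12.del N s pr.1) ^ ((n:ℝ)*lam)) * S) :=
          ENNReal.tsum_le_tsum fun pr => hRS pr.1 pr.2.1 pr.2.2
      _ = ∑' pr : ℕ × ↥(S12.J n N),
            (a * (ENNReal.ofReal ((S12.gam N ^ (pr.1+1) / (2*(N:ℝ))) ^ ((n:ℝ)*lam)) * S)) := by
          apply tsum_congr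
          intro pr
          rw [hdel pr.1, mul_assoc]
      _ = a * ((∑' pr : ℕ × ↥(S12.J n N),
            ENNReal.ofReal ((S12.gam N ^ (pr.1+1) / (2*(N:ℝ))) ^ ((n:ℝ)*lam))) * S) := by
          rw [ENNReal.tsum_mul_left, ENNReal.tsum_mul_right]
      _ = a * (B * S) := by rw [hBdef]
  have key2 : a⁻¹ * (a * (B * S)) = B * S := by
    rw [← mul_assoc, ENNReal.inv_mul_cancel ha0 ha', one_mul]
  have key3 : B ≤ ENNReal.ofReal (B.toReal + 1) :=
    calc B = ENNReal.ofReal B.toReal := (ENNReal.ofReal_toReal hBtop).symm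
      _ ≤ ENNReal.ofReal (B.toReal + 1) := ENNReal.ofReal_le_ofReal (by linarith)
  calc (ENNReal.ofReal (Q.vol ^ lam))⁻¹ *
        (∫⁻ x in Q.toSet, ENNReal.ofReal (|f x| ^ p * w x))
      = a⁻¹ * (∫⁻ x in Q.toSet, ENNReal.ofReal (|f x| ^ p * w x)) := by rw [hQvol]
    _ ≤ a⁻¹ * (a * (B * S)) := mul_le_mul_right key1 _
    _ = B * S := key2
    _ ≤ ENNReal.ofReal (B.toReal + 1) * S := mul_le_mul_left key3 _
end
end
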